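/- Let E be a Banach space with separable dual E* and let μ be a probability measure on E with ∫‖x‖ dμ(x) < ∞ and ∫ x dμ(x) = 0. Let X₁,…,Xₙ be i.i.d. random elements of E sampled from μ and let ε₁,…,εₙ be i.i.d. uniform ±1 random variables independent from X₁,…,Xₙ. Then 𝔼 W₁,₁(μ, (1/n)∑ᵢ δ_{Xᵢ}) ≥ (1/(2n))·𝔼‖∑ᵢ εᵢ Xᵢ‖. -/

import Mathlib

open MeasureTheory ProbabilityTheory
open scoped ENNReal NNReal RealInnerProductSpace

noncomputable section

/-- Max-sliced 1-Wasserstein distance on a Banach space, via the dual unit ball and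
1-Lipschitz test functions. -/
def W11Banach (E : Type*) [NormedAddCommGroup E] [NormedSpace ℝ E] [MeasurableSpace E]
    (μ₁ μ₂ : Measure E) : ℝ≥0∞ :=
  ⨆ (v : {v : E →L[ℝ] ℝ // ‖v‖ ≤ 1}) (f : {f : ℝ → ℝ // LipschitzWith 1 f}),
    ENNReal.ofReal |(∫ x, f.1 (v.1 x) ∂μ₁) - ∫ x, f.1 (v.1 x) ∂μ₂|

/-- The empirical measure of the points `Y 0, …, Y (n-1)`. -/
def empirical {E : Type*} [MeasurableSpace E] (n : ℕ) (Y : Fin n → E) : Measure E :=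
  (n : ℝ≥0∞)⁻¹ • ∑ i, Measure.dirac (Y i)

/-- The distribution of a uniform ±1 (Rademacher) random variable. -/
def rademacher : Measure ℝ := (2 : ℝ≥0∞)⁻¹ • (Measure.dirac (1 : ℝ) + Measure.dirac (-1 : ℝ))

/-!
Testing the max-sliced distance with `f = id` and a functional norming `∑ Xᵢ` shows, since `μ` is
centered, that `W₁,₁(μ, (1/n) ∑ δ_{Xᵢ}) ≥ (1/n) ‖∑ Xᵢ‖` pointwise. For a fixed sign pattern,
`∑ εᵢ Xᵢ` is the difference of the sums of `Xᵢ` over the indices with `εᵢ = 1` and `εᵢ = -1`; by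
Jensen, adding an independent centered term can only increase the expected norm, so each of these
partial sums has expected norm at most `𝔼 ‖∑ Xᵢ‖`. Conditioning on the signs, which are
independent of the `Xᵢ`, gives `𝔼 ‖∑ εᵢ Xᵢ‖ ≤ 2 𝔼 ‖∑ Xᵢ‖`. Separability of `E*` makes `E`
separable, which is what the measurability of these sums requires.
-/

section SeparableDual

variable {E : Type*} [NormedAddCommGroup E] [NormedSpace ℝ E]

theorem StrongDual.exists_norm_le_one_half_norm_le_apply (v : StrongDual ℝ E) :
    ∃ x : E, ‖x‖ ≤ 1 ∧ ‖v‖ / 2 ≤ v x := by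
  rcases eq_or_ne v 0 with rfl | hv
  · exact ⟨0, by simp⟩
  obtain ⟨x, hx1, hx2⟩ := v.exists_lt_apply_of_lt_opNorm (half_lt_self (norm_pos_iff.2 hv))
  rw [Real.norm_eq_abs] at hx2
  rcases le_or_gt 0 (v x) with h | h
  · exact ⟨x, hx1.le, by rw [abs_of_nonneg h] at hx2; exact hx2.le⟩
  · exact ⟨-x, by simpa using hx1.le, by rw [abs_of_neg h] at hx2; simpa using hx2.le⟩

/-- If `f` vanishes at a point where `v` nearly attains its norm, then `‖f‖ ≤ 3 ‖f - v‖`. -/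
theorem StrongDual.eq_zero_of_vanishing_on_norming_points {D : Set (StrongDual ℝ E)}
    (hD : Dense D) {x : StrongDual ℝ E → E} (hx_norm : ∀ v, ‖x v‖ ≤ 1)
    (hx_apply : ∀ v : StrongDual ℝ E, ‖v‖ / 2 ≤ v (x v))
    {f : StrongDual ℝ E} (hf : ∀ v ∈ D, f (x v) = 0) : f = 0 := by
  by_contra hf0
  obtain ⟨v, hvD, hfv⟩ := hD.exists_dist_lt f (by positivity : 0 < ‖f‖ / 3)
  rw [dist_eq_norm] at hfv
  have hv : ‖v‖ / 2 ≤ ‖f - v‖ :=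
    calc ‖v‖ / 2 ≤ v (x v) := hx_apply v
      _ = (v - f) (x v) := by simp [hf v hvD]
      _ ≤ ‖v - f‖ := (le_abs_self _).trans ((v - f).unit_le_opNorm _ (hx_norm v))
      _ = ‖f - v‖ := norm_sub_rev _ _
  linarith [norm_le_insert' f v]

theorem Submodule.exists_strongDual_vanishing_ne_zero_of_notMem {M : Submodule ℝ E}
    (hM : IsClosed (M : Set E)) {y : E} (hy : y ∉ M) :
    ∃ f : StrongDual ℝ E, (∀ x ∈ M, f x = 0) ∧ f y ≠ 0 := by
  obtain ⟨f, u, hfM, hfy⟩ := geometric_hahn_banach_closed_point M.convex hM hy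
  have hu : 0 < u := by simpa using hfM 0 M.zero_mem
  -- `f` is bounded above on the subspace `M`, hence zero on it.
  have hf : ∀ x ∈ M, f x = 0 := fun x hx => by
    by_contra hfx
    have := hfM _ (M.smul_mem (u / f x) hx)
    rw [map_smul, smul_eq_mul, div_mul_cancel₀ _ hfx] at this
    exact this.false
  exact ⟨f, hf, by linarith⟩

theorem separableSpace_of_separableSpace_strongDual
    [TopologicalSpace.SeparableSpace (StrongDual ℝ E)] : TopologicalSpace.SeparableSpace E := by
  obtain ⟨D, hDc, hD⟩ := TopologicalSpace.exists_countable_dense (StrongDual ℝ E)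
  choose x hx_norm hx_apply using StrongDual.exists_norm_le_one_half_norm_le_apply (E := E)
  set M := (Submodule.span ℝ (x '' D)).topologicalClosure
  have hM : M = ⊤ := by
    refine Submodule.eq_top_iff'.2 fun y => by_contra fun hy => ?_
    obtain ⟨f, hfM, hfy⟩ := Submodule.exists_strongDual_vanishing_ne_zero_of_notMem
      (Submodule.isClosed_topologicalClosure _) hy
    have hf : f = 0 := StrongDual.eq_zero_of_vanishing_on_norming_points hD hx_norm hx_apply
      fun v hv => hfM _ (Submodule.le_topologicalClosure _ (Submodule.subset_span ⟨v, hv, rfl⟩))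
    exact hfy (by simp [hf])
  have : TopologicalSpace.IsSeparable (M : Set E) := by
    rw [Submodule.topologicalClosure_coe]
    exact ((hDc.image x).isSeparable.span).closure
  rw [hM, Submodule.top_coe] at this
  exact TopologicalSpace.isSeparable_univ_iff.1 this

end SeparableDual

namespace ProbabilityTheory

variable {Ω α β : Type*} [MeasurableSpace Ω] [MeasurableSpace α] [MeasurableSpace β]
  {P : Measure Ω}

theorem IndepFun.lintegral_comp_eq_lintegral_lintegral [IsFiniteMeasure P] {f : Ω → α}
    {g : Ω → β} (hf : Measurable f) (hg : Measurable g) (hfg : IndepFun f g P) {F : α × β → ℝ≥0∞}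
    (hF : Measurable F) :
    ∫⁻ ω, F (f ω, g ω) ∂P = ∫⁻ ω, ∫⁻ ω', F (f ω, g ω') ∂P ∂P := by
  have hmap := (indepFun_iff_map_prod_eq_prod_map_map hf.aemeasurable hg.aemeasurable).1 hfg
  rw [← lintegral_map hF (hf.prodMk hg), hmap, lintegral_prod _ hF.aemeasurable,
    lintegral_map hF.lintegral_prod_right' hf]
  congr with ω
  exact lintegral_map (hF.comp measurable_prodMk_left) hg

variable {E : Type*} [NormedAddCommGroup E] [NormedSpace ℝ E] [CompleteSpace E]
  [MeasurableSpace E] [BorelSpace E] [SecondCountableTopology E] [IsProbabilityMeasure P]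

/-- Averaging `y + Z` over the centered variable `Z` returns `y`, so `‖y‖ ≤ 𝔼 ‖y + Z‖`. -/
theorem IndepFun.lintegral_enorm_le_lintegral_enorm_add {Y Z : Ω → E} (hY : Measurable Y)
    (hZ : Measurable Z) (hZ_int : Integrable Z P) (hZ_mean : ∫ ω, Z ω ∂P = 0)
    (hYZ : IndepFun Y Z P) :
    ∫⁻ ω, ‖Y ω‖ₑ ∂P ≤ ∫⁻ ω, ‖Y ω + Z ω‖ₑ ∂P := by
  rw [hYZ.lintegral_comp_eq_lintegral_lintegral hY hZ (F := fun p => ‖p.1 + p.2‖ₑ) (by fun_prop)]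
  refine lintegral_mono fun ω => ?_
  calc ‖Y ω‖ₑ = ‖∫ ω', Y ω + Z ω' ∂P‖ₑ := by
        rw [integral_add (integrable_const _) hZ_int, hZ_mean]; simp
    _ ≤ ∫⁻ ω', ‖Y ω + Z ω'‖ₑ ∂P := enorm_integral_le_lintegral_enorm _

theorem iIndepFun.lintegral_enorm_sum_le {ι : Type*} [Fintype ι] {X : ι → Ω → E}
    (hX : ∀ i, Measurable (X i)) (hX_int : ∀ i, Integrable (X i) P)
    (hX_mean : ∀ i, ∫ ω, X i ω ∂P = 0) (hX_indep : iIndepFun X P) (A : Finset ι) :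
    ∫⁻ ω, ‖∑ i ∈ A, X i ω‖ₑ ∂P ≤ ∫⁻ ω, ‖∑ i, X i ω‖ₑ ∂P := by
  classical
  have hsum_meas : ∀ B : Finset ι, Measurable fun ω => ∑ i ∈ B, X i ω :=
    fun B => Finset.measurable_sum _ fun i _ => hX i
  have hindep : IndepFun (fun ω => ∑ i ∈ A, X i ω) (fun ω => ∑ i ∈ Aᶜ, X i ω) P := by
    have h := (hX_indep.indepFun_finset A Aᶜ disjoint_compl_right hX).comp
      (Finset.measurable_sum Finset.univ fun i _ => measurable_pi_apply i)
      (Finset.measurable_sum Finset.univ fun i _ => measurable_pi_apply i)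
    convert h using 1 <;> ext ω <;> exact (Finset.sum_coe_sort _ fun i => X i ω).symm
  have := hindep.lintegral_enorm_le_lintegral_enorm_add (hsum_meas A) (hsum_meas Aᶜ)
    (integrable_finsetSum _ fun i _ => hX_int i)
    (by simp [integral_finsetSum _ fun i _ => hX_int i, hX_mean])
  simpa only [Finset.sum_add_sum_compl] using this

variable {ι : Type*} [Fintype ι]

theorem iIndepFun.lintegral_enorm_sum_smul_le_of_sign {X : ι → Ω → E}
    (hX : ∀ i, Measurable (X i)) (hX_int : ∀ i, Integrable (X i) P)
    (hX_mean : ∀ i, ∫ ω, X i ω ∂P = 0) (hX_indep : iIndepFun X P) {e : ι → ℝ}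
    (he : ∀ i, e i = 1 ∨ e i = -1) :
    ∫⁻ ω, ‖∑ i, e i • X i ω‖ₑ ∂P ≤ 2 * ∫⁻ ω, ‖∑ i, X i ω‖ₑ ∂P := by
  classical
  set A := Finset.univ.filter (e · = 1)
  have hsplit : ∀ ω, ∑ i, e i • X i ω = ∑ i ∈ A, X i ω - ∑ i ∈ Aᶜ, X i ω := fun ω => by
    rw [← Finset.sum_add_sum_compl A, sub_eq_add_neg, ← Finset.sum_neg_distrib]
    congr 1 <;> refine Finset.sum_congr rfl fun i hi => ?_
    · simp_all [A]
    · have : e i = -1 := (he i).resolve_left (by simpa [A] using hi)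
      simp [this]
  have hle := hX_indep.lintegral_enorm_sum_le hX hX_int hX_mean
  calc ∫⁻ ω, ‖∑ i, e i • X i ω‖ₑ ∂P
      ≤ ∫⁻ ω, ‖∑ i ∈ A, X i ω‖ₑ + ‖∑ i ∈ Aᶜ, X i ω‖ₑ ∂P :=
        lintegral_mono fun ω => hsplit ω ▸ enorm_sub_le
    _ = ∫⁻ ω, ‖∑ i ∈ A, X i ω‖ₑ ∂P + ∫⁻ ω, ‖∑ i ∈ Aᶜ, X i ω‖ₑ ∂P :=
        lintegral_add_left (Finset.measurable_sum _ fun i _ => hX i).enorm _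
    _ ≤ 2 * ∫⁻ ω, ‖∑ i, X i ω‖ₑ ∂P := by
        rw [two_mul]; exact add_le_add (hle A) (hle Aᶜ)

theorem lintegral_enorm_sum_smul_le_of_indepFun_sign {X : ι → Ω → E} {ε : ι → Ω → ℝ}
    (hX : ∀ i, Measurable (X i)) (hε : ∀ i, Measurable (ε i))
    (hX_int : ∀ i, Integrable (X i) P) (hX_mean : ∀ i, ∫ ω, X i ω ∂P = 0)
    (hX_indep : iIndepFun X P) (hε_sign : ∀ᵐ ω ∂P, ∀ i, ε i ω = 1 ∨ ε i ω = -1)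
    (hεX : IndepFun (fun ω i => ε i ω) (fun ω i => X i ω) P) :
    ∫⁻ ω, ‖∑ i, ε i ω • X i ω‖ₑ ∂P ≤ 2 * ∫⁻ ω, ‖∑ i, X i ω‖ₑ ∂P := by
  rw [hεX.lintegral_comp_eq_lintegral_lintegral (measurable_pi_lambda _ hε)
    (measurable_pi_lambda _ hX) (F := fun p => ‖∑ i, p.1 i • p.2 i‖ₑ) (by fun_prop)]
  calc ∫⁻ ω, ∫⁻ ω', ‖∑ i, ε i ω • X i ω'‖ₑ ∂P ∂P ≤ ∫⁻ _, 2 * ∫⁻ ω, ‖∑ i, X i ω‖ₑ ∂P ∂P :=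
        lintegral_mono_ae <| hε_sign.mono fun ω hω =>
          hX_indep.lintegral_enorm_sum_smul_le_of_sign hX hX_int hX_mean hω
    _ = 2 * ∫⁻ ω, ‖∑ i, X i ω‖ₑ ∂P := by simp

end ProbabilityTheory

theorem ae_rademacher_eq_one_or_neg_one : ∀ᵐ x ∂rademacher, x = 1 ∨ x = -1 := by
  refine Measure.ae_smul_measure (ae_add_measure_iff.2 ⟨?_, ?_⟩) _ <;>
    simp [ae_dirac_eq]

section Wasserstein

variable {E : Type*} [NormedAddCommGroup E] [NormedSpace ℝ E] [CompleteSpace E]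
  [MeasurableSpace E]

theorem enorm_integral_sub_integral_le_W11Banach {μ₁ μ₂ : Measure E}
    (h₁ : Integrable (fun x => x) μ₁) (h₂ : Integrable (fun x => x) μ₂) :
    ‖∫ x, x ∂μ₁ - ∫ x, x ∂μ₂‖ₑ ≤ W11Banach E μ₁ μ₂ := by
  obtain ⟨v, hv, hv_apply⟩ := exists_dual_vector'' ℝ (∫ x, x ∂μ₁ - ∫ x, x ∂μ₂)
  refine le_iSup₂_of_le (⟨v, hv⟩ : {v : E →L[ℝ] ℝ // ‖v‖ ≤ 1})
    (⟨id, LipschitzWith.id⟩ : {f : ℝ → ℝ // LipschitzWith 1 f}) ?_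
  simp only [id, v.integral_comp_comm h₁, v.integral_comp_comm h₂, ← map_sub, hv_apply]
  simp [← ofReal_norm]

variable {α F : Type*} [MeasurableSpace α] [MeasurableSingletonClass α] [NormedAddCommGroup F]

theorem integral_empirical [NormedSpace ℝ F] [CompleteSpace F] (f : α → F) (n : ℕ)
    (Y : Fin n → α) :
    ∫ x, f x ∂(empirical n Y) = (n : ℝ)⁻¹ • ∑ i, f (Y i) := by
  rw [empirical, integral_smul_measure,
    integral_finsetSum_measure fun i _ => integrable_dirac enorm_lt_top]
  simp [integral_dirac]

theorem integrable_empirical (f : α → F) {n : ℕ} (hn : n ≠ 0) (Y : Fin n → α) :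
    Integrable f (empirical n Y) :=
  (integrable_finsetSum_measure.2 fun i _ => integrable_dirac enorm_lt_top).smul_measure
    (ENNReal.inv_ne_top.2 (by simpa using hn))

theorem inv_natCast_mul_enorm_sum_le_W11Banach [MeasurableSingletonClass E] {μ : Measure E}
    (hμ : Integrable (fun x => x) μ) (hμ_mean : ∫ x, x ∂μ = 0) (n : ℕ) (Y : Fin n → E) :
    (n : ℝ≥0∞)⁻¹ * ‖∑ i, Y i‖ₑ ≤ W11Banach E μ (empirical n Y) := by
  rcases eq_or_ne n 0 with rfl | hn
  · simp
  calc (n : ℝ≥0∞)⁻¹ * ‖∑ i, Y i‖ₑ = ‖∫ x, x ∂μ - ∫ x, x ∂(empirical n Y)‖ₑ := by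
        rw [hμ_mean, integral_empirical, zero_sub, enorm_neg, enorm_smul,
          enorm_inv (by simpa using hn)]
        simp
    _ ≤ W11Banach E μ (empirical n Y) :=
        enorm_integral_sub_integral_le_W11Banach hμ (integrable_empirical _ hn Y)

end Wasserstein

theorem max_sliced_W1_banach_lower_general
    (E : Type) [NormedAddCommGroup E] [NormedSpace ℝ E] [CompleteSpace E]
    [MeasurableSpace E] [BorelSpace E] [TopologicalSpace.SeparableSpace (E →L[ℝ] ℝ)]
    (μ : Measure E)
    (hint : Integrable (fun x => ‖x‖) μ) (hmean : (∫ x, x ∂μ) = 0)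
    (n : ℕ)
    (Ω : Type) [MeasurableSpace Ω] (P : Measure Ω) [IsProbabilityMeasure P]
    (X : Fin n → Ω → E) (ε : Fin n → Ω → ℝ)
    (hXm : ∀ i, Measurable (X i)) (hεm : ∀ i, Measurable (ε i))
    (hXd : ∀ i, Measure.map (X i) P = μ)
    (hεd : ∀ i, Measure.map (ε i) P = rademacher)
    (hXi : iIndepFun X P)
    (hind : IndepFun (fun ω => (fun i => ε i ω)) (fun ω => (fun i => X i ω)) P) :
    (2 * (n : ℝ≥0∞))⁻¹ * ∫⁻ ω, ENNReal.ofReal ‖∑ i, ε i ω • X i ω‖ ∂P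
      ≤ ∫⁻ ω, W11Banach E μ (empirical n fun i => X i ω) ∂P := by
  have := separableSpace_of_separableSpace_strongDual (E := E)
  have := UniformSpace.secondCountable_of_separable E
  have hμ : Integrable (fun x => x) μ := (integrable_norm_iff aestronglyMeasurable_id).1 hint
  have hX_law : ∀ i, IdentDistrib (X i) id P μ := fun i =>
    ⟨(hXm i).aemeasurable, aemeasurable_id, by rw [hXd i, Measure.map_id]⟩
  have hX_int : ∀ i, Integrable (X i) P := fun i => (hX_law i).integrable_iff.2 hμ
  have hX_mean : ∀ i, ∫ ω, X i ω ∂P = 0 := fun i => (hX_law i).integral_eq.trans hmean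
  have hε_sign : ∀ᵐ ω ∂P, ∀ i, ε i ω = 1 ∨ ε i ω = -1 := ae_all_iff.2 fun i =>
    ae_of_ae_map (hεm i).aemeasurable (hεd i ▸ ae_rademacher_eq_one_or_neg_one)
  calc (2 * (n : ℝ≥0∞))⁻¹ * ∫⁻ ω, ENNReal.ofReal ‖∑ i, ε i ω • X i ω‖ ∂P
      ≤ (2 * (n : ℝ≥0∞))⁻¹ * (2 * ∫⁻ ω, ‖∑ i, X i ω‖ₑ ∂P) := by
        simp only [ofReal_norm]
        gcongr
        exact lintegral_enorm_sum_smul_le_of_indepFun_sign hXm hεm hX_int hX_mean hXi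
          hε_sign hind
    _ = ∫⁻ ω, (n : ℝ≥0∞)⁻¹ * ‖∑ i, X i ω‖ₑ ∂P := by
        rw [lintegral_const_mul _ (Finset.measurable_sum _ fun i _ => hXm i).enorm,
          ENNReal.mul_inv (by simp) (by simp), mul_mul_mul_comm,
          ENNReal.inv_mul_cancel (by simp) (by simp), one_mul]
    _ ≤ ∫⁻ ω, W11Banach E μ (empirical n fun i => X i ω) ∂P :=
        lintegral_mono fun ω => inv_natCast_mul_enorm_sum_le_W11Banach hμ hmean n _

/-- Lower bound for the expected max-sliced 1-Wasserstein distance between a centered measure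
on a Banach space and its empirical distribution (Proposition 2.11 of the paper). -/
theorem max_sliced_W1_banach_lower
    (E : Type) [NormedAddCommGroup E] [NormedSpace ℝ E] [CompleteSpace E]
    [MeasurableSpace E] [BorelSpace E] [TopologicalSpace.SeparableSpace (E →L[ℝ] ℝ)]
    (μ : Measure E) [IsProbabilityMeasure μ]
    (hint : Integrable (fun x => ‖x‖) μ) (hmean : (∫ x, x ∂μ) = 0)
    (n : ℕ) (hn : 0 < n)
    (Ω : Type) [MeasurableSpace Ω] (P : Measure Ω) [IsProbabilityMeasure P]
    (X : Fin n → Ω → E) (ε : Fin n → Ω → ℝ)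
    (hXm : ∀ i, Measurable (X i)) (hεm : ∀ i, Measurable (ε i))
    (hXd : ∀ i, Measure.map (X i) P = μ)
    (hεd : ∀ i, Measure.map (ε i) P = rademacher)
    (hXi : iIndepFun X P)
    (hεi : iIndepFun ε P)
    (hind : IndepFun (fun ω => (fun i => ε i ω)) (fun ω => (fun i => X i ω)) P) :
    (2 * (n : ℝ≥0∞))⁻¹ * ∫⁻ ω, ENNReal.ofReal ‖∑ i, ε i ω • X i ω‖ ∂P
      ≤ ∫⁻ ω, W11Banach E μ (empirical n fun i => X i ω) ∂P :=
  max_sliced_W1_banach_lower_general E μ hint hmean n Ω P X ε hXm hεm hXd hεd hXi hind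

end
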